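/- arXiv:2005.09489 — 6 statements merged into one kernel-verified Lean document; each statement's English description precedes it below -/
import Mathlib

section
/- Every upward-closed language over a finite alphabet (with respect to the subword ordering) is a finite union of piece languages, i.e., sets of the form Σ* a₁ Σ* a₂ ⋯ Σ* aₙ Σ* with a₁,…,aₙ ∈ Σ. In particular, every upward-closed language is regular. -/
/-!
By Higman's lemma the subword order is a well-quasi-order, so the minimal words of an upward
closed language `U` form a finite antichain; since every word of `U` lies above a minimal one,
`U` is the union of their piece languages. A piece language `pieceLang w` is regular by
Myhill–Nerode: its left quotients are the piece languages of the suffixes of `w`.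
-/

/-- The piece language `Σ* a₁ Σ* a₂ ⋯ Σ* aₙ Σ*` associated with the word `a₁a₂⋯aₙ`. -/
def pieceLang {A : Type*} : List A → Set (List A)
  | [] => Set.univ
  | a :: w => {v | ∃ p q : List A, v = p ++ a :: q ∧ q ∈ pieceLang w}

section

open List Language

variable {A : Type*}

theorem mem_pieceLang {w v : List A} : v ∈ pieceLang w ↔ w <+ v := by
  induction w generalizing v with
  | nil => simp [pieceLang]
  | cons a w ih =>
    simp only [pieceLang, Set.mem_ofPred_eq, ih]
    constructor
    · rintro ⟨p, q, rfl, hq⟩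
      exact (cons_sublist_cons.2 hq).trans (sublist_append_right _ _)
    · intro h
      induction v with
      | nil => simp at h
      | cons b v ihv =>
        rcases sublist_cons_iff.1 h with h | ⟨r, hr, hw⟩
        · obtain ⟨p, q, rfl, hq⟩ := ihv h
          exact ⟨b :: p, q, rfl, hq⟩
        · obtain ⟨rfl, rfl⟩ := cons_eq_cons.1 hr
          exact ⟨[], v, rfl, hw⟩

/-- **Higman's lemma** for a finite alphabet. -/
theorem wellQuasiOrdered_sublist [Finite A] :
    WellQuasiOrdered (· <+ · : List A → List A → Prop) := by
  have h := (Set.finite_univ (α := A)).partiallyWellOrderedOn.partiallyWellOrderedOn_sublistForall₂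
    (· = ·)
  simp only [Set.mem_univ, implies_true, Set.ofPred_true, Set.partiallyWellOrderedOn_univ_iff] at h
  convert h using 3
  simp [sublistForall₂_iff, forall₂_eq_eq_eq]

def sublistMinimals (U : Set (List A)) : Set (List A) :=
  {m ∈ U | ∀ v ∈ U, v <+ m → v = m}

theorem isAntichain_sublistMinimals (U : Set (List A)) :
    IsAntichain (· <+ ·) (sublistMinimals U) :=
  fun _ hm₁ _ hm₂ hne hle => hne (hm₂.2 _ hm₁.1 hle)

theorem finite_sublistMinimals [Finite A] (U : Set (List A)) : (sublistMinimals U).Finite :=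
  (isAntichain_sublistMinimals U).finite_of_wellQuasiOrdered wellQuasiOrdered_sublist

theorem exists_mem_sublistMinimals_sublist {U : Set (List A)} {u : List A} (hu : u ∈ U) :
    ∃ m ∈ sublistMinimals U, m <+ u := by
  obtain ⟨m, ⟨hmU, hmu⟩, hmin⟩ :=
    (measure length).wf.has_min {v | v ∈ U ∧ v <+ u} ⟨u, hu, Sublist.refl u⟩
  refine ⟨m, ⟨hmU, fun v hvU hvm => ?_⟩, hmu⟩
  exact hvm.eq_of_length_le (not_lt.1 (hmin v ⟨hvU, hvm.trans hmu⟩))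

theorem eq_biUnion_sublistMinimals {U : Set (List A)}
    (hU : ∀ u ∈ U, ∀ v : List A, u <+ v → v ∈ U) :
    U = ⋃ m ∈ sublistMinimals U, pieceLang m := by
  ext u
  simp only [Set.mem_iUnion, mem_pieceLang, exists_prop]
  constructor
  · exact exists_mem_sublistMinimals_sublist
  · rintro ⟨m, hm, hmu⟩
    exact hU m hm.1 u hmu

theorem leftQuotient_pieceLang_nil (x : List A) :
    leftQuotient (pieceLang [] : Language A) x = pieceLang [] :=
  rfl

theorem leftQuotient_pieceLang_cons_self (a : A) (w : List A) :
    leftQuotient (pieceLang (a :: w) : Language A) [a] = pieceLang w :=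
  Set.ext fun _ => mem_pieceLang.trans (cons_sublist_cons.trans mem_pieceLang.symm)

theorem leftQuotient_pieceLang_cons_of_ne {a b : A} (hba : b ≠ a) (w : List A) :
    leftQuotient (pieceLang (b :: w) : Language A) [a] = pieceLang (b :: w) := by
  ext y
  change a :: y ∈ pieceLang (b :: w) ↔ y ∈ pieceLang (b :: w)
  simp [mem_pieceLang, sublist_cons_iff, hba]

theorem exists_suffix_leftQuotient_pieceLang_eq (w x : List A) :
    ∃ s ∈ w.tails, leftQuotient (pieceLang w : Language A) x = pieceLang s := by
  induction x generalizing w with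
  | nil => exact ⟨w, by simp, rfl⟩
  | cons a x ih =>
    rw [← singleton_append, leftQuotient_append (pieceLang w)]
    rcases w with _ | ⟨b, w⟩
    · rw [leftQuotient_pieceLang_nil]
      exact ih []
    by_cases hba : b = a
    · subst hba
      obtain ⟨s, hs, hq⟩ := ih w
      rw [leftQuotient_pieceLang_cons_self]
      exact ⟨s, by simp_all [mem_tails], hq⟩
    · rw [leftQuotient_pieceLang_cons_of_ne hba]
      exact ih (b :: w)

theorem isRegular_pieceLang (w : List A) : Language.IsRegular (pieceLang w : Language A) := by
  refine IsRegular.of_finite_range_leftQuotient ((w.tails.finite_toSet.image pieceLang).subset ?_)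
  rintro _ ⟨x, rfl⟩
  obtain ⟨s, hs, hq⟩ := exists_suffix_leftQuotient_pieceLang_eq w x
  exact ⟨s, hs, hq.symm⟩

theorem Language.isRegular_zero : Language.IsRegular (0 : Language A) :=
  IsRegular.of_finite_range_leftQuotient ((Set.finite_singleton 0).subset
    (Set.range_subset_iff.2 fun _ => rfl))

theorem isRegular_biUnion {ι : Type*} (F : Finset ι) (L : ι → Set (List A))
    (hL : ∀ i ∈ F, Language.IsRegular (L i : Language A)) :
    Language.IsRegular ((⋃ i ∈ F, L i : Set (List A)) : Language A) := by
  classical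
  induction F using Finset.induction_on with
  | empty =>
    simp only [Finset.notMem_empty, Set.iUnion_of_empty, Set.iUnion_empty]
    exact isRegular_zero
  | insert i F _ ih =>
    rw [Finset.set_biUnion_insert]
    exact (hL i (F.mem_insert_self i)).add (ih fun j hj => hL j (Finset.mem_insert_of_mem hj))

end

/-- Every upward-closed language over a finite alphabet is a finite union of piece
languages, and in particular is regular. -/
theorem upwardClosed_eq_finite_union_pieces {A : Type*} [Finite A] (U : Set (List A))
    (hU : ∀ u ∈ U, ∀ v : List A, u.Sublist v → v ∈ U) :
    (∃ F : Finset (List A), U = ⋃ w ∈ F, pieceLang w) ∧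
      Language.IsRegular (U : Language A) := by
  have hfin := finite_sublistMinimals U
  have hU_eq : U = ⋃ w ∈ hfin.toFinset, pieceLang w := by
    simpa only [Set.Finite.mem_toFinset] using eq_biUnion_sublistMinimals hU
  refine ⟨⟨hfin.toFinset, hU_eq⟩, ?_⟩
  rw [hU_eq]
  exact isRegular_biUnion _ _ fun w _ => isRegular_pieceLang w
end

section
/- Let G be a context-free grammar in Chomsky normal form with nonterminal set N, no useless symbols and no ε-productions. If w is a ⪯-minimal word of L(G) (i.e., no proper subword of w is in L(G)), then w has a derivation tree of height at most |N| + 1. -/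
/-- A context-free grammar in Chomsky normal form: binary productions `A → BC`
and terminal productions `A → a` (hence no ε-productions). -/
structure CNF (N T : Type*) where
  bin : N → N → N → Prop
  leaf : N → T → Prop
  start : N

/-- `DerivesH G A n w` : the word `w` has a derivation tree from `A` of height at most `n`. -/
inductive CNF.DerivesH {N T : Type*} (G : CNF N T) : N → ℕ → List T → Prop
  | leaf {A : N} {a : T} (n : ℕ) : G.leaf A a → CNF.DerivesH G A (n + 1) [a]
  | bin {A B C : N} {u v : List T} {n : ℕ} : G.bin A B C →
      CNF.DerivesH G B n u → CNF.DerivesH G C n v → CNF.DerivesH G A (n + 1) (u ++ v)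

/-- The language of a CNF grammar. -/
def CNF.lang {N T : Type*} (G : CNF N T) : Set (List T) :=
  {w | ∃ n : ℕ, G.DerivesH G.start n w}

namespace CNF

variable {N T : Type*} (G : CNF N T)

theorem DerivesH.mono {A : N} {w : List T} {m : ℕ} (h : G.DerivesH A m w) :
    ∀ {n : ℕ}, m ≤ n → G.DerivesH A n w := by
  induction h with
  | leaf k hl =>
    intro n hn
    obtain ⟨j, rfl⟩ := Nat.exists_eq_add_of_le hn
    have : k + 1 + j = (k + j) + 1 := by omega
    rw [this]
    exact .leaf _ hl
  | @bin A' B C u v k hbin db dc ihb ihc =>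
    intro n hn
    obtain ⟨j, rfl⟩ := Nat.exists_eq_add_of_le hn
    have : k + 1 + j = (k + j) + 1 := by omega
    rw [this]
    exact .bin hbin (ihb (by omega)) (ihc (by omega))

theorem not_derivesH_zero {A : N} {w : List T} (h : G.DerivesH A 0 w) : False := by
  cases h

/-- The set of heights `n` such that some sublist of `w` derives from `A` with height `≤ n`. -/
def SS (A : N) (w : List T) : Set ℕ := {n | ∃ v, v.Sublist w ∧ G.DerivesH A n v}

/-- The minimal such height. -/
noncomputable def ell (A : N) (w : List T) : ℕ := sInf (G.SS A w)

theorem ell_pos {A : N} {w : List T} (hne : (G.SS A w).Nonempty) : 1 ≤ G.ell A w := by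
  rcases Nat.eq_zero_or_pos (G.ell A w) with h0 | h
  · exfalso
    have hmem := Nat.sInf_mem hne
    rw [show sInf (G.SS A w) = G.ell A w from rfl, h0] at hmem
    obtain ⟨v, -, d⟩ := hmem
    exact G.not_derivesH_zero d
  · exact h

theorem step {A : N} {w : List T} {k : ℕ} (hne : (G.SS A w).Nonempty)
    (h : G.ell A w = k + 2) :
    ∃ B u, u.Sublist w ∧ (G.SS B u).Nonempty ∧ G.ell B u = k + 1 := by
  have hmem := Nat.sInf_mem hne
  rw [show sInf (G.SS A w) = G.ell A w from rfl, h] at hmem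
  obtain ⟨v, hvw, d⟩ := hmem
  have hrfl : G.ell A w = sInf (G.SS A w) := rfl
  cases d with
  | leaf n hl =>
    exfalso
    have h1 : (1 : ℕ) ∈ G.SS A w := ⟨_, hvw, .leaf 0 hl⟩
    have := Nat.sInf_le h1
    omega
  | @bin _ B C u v' n hbin db dc =>
    have huw : u.Sublist w := (List.sublist_append_left u v').trans hvw
    have hvw' : v'.Sublist w := (List.sublist_append_right u v').trans hvw
    have hBu : (k + 1) ∈ G.SS B u := ⟨u, List.Sublist.refl u, db⟩
    have hCv : (k + 1) ∈ G.SS C v' := ⟨v', List.Sublist.refl v', dc⟩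
    have hB : G.ell B u ≤ k + 1 := Nat.sInf_le hBu
    have hC : G.ell C v' ≤ k + 1 := Nat.sInf_le hCv
    by_cases hB1 : G.ell B u = k + 1
    · exact ⟨B, u, huw, ⟨_, hBu⟩, hB1⟩
    by_cases hC1 : G.ell C v' = k + 1
    · exact ⟨C, v', hvw', ⟨_, hCv⟩, hC1⟩
    exfalso
    have hBle : G.ell B u ≤ k := by
      have : G.ell B u ≤ k + 1 := hB
      omega
    have hCle : G.ell C v' ≤ k := by
      have : G.ell C v' ≤ k + 1 := hC
      omega
    obtain ⟨u1, hu1, d1⟩ := Nat.sInf_mem (⟨_, hBu⟩ : (G.SS B u).Nonempty)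
    obtain ⟨v1, hv1, d2⟩ := Nat.sInf_mem (⟨_, hCv⟩ : (G.SS C v').Nonempty)
    have d1' : G.DerivesH B k u1 := d1.mono G hBle
    have d2' : G.DerivesH C k v1 := d2.mono G hCle
    have hmem2 : (k + 1) ∈ G.SS A w :=
      ⟨u1 ++ v1, (hu1.append hv1).trans hvw, .bin hbin d1' d2'⟩
    have := Nat.sInf_le hmem2
    omega

open Classical in
/-- The set of nonterminals deriving (a sublist of) some sublist `u` of `w` at height `≤ k`. -/
noncomputable def PP [Fintype N] (w : List T) (k : ℕ) : Finset N :=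
  Finset.univ.filter (fun B => ∃ u, u.Sublist w ∧ (G.SS B u).Nonempty ∧ G.ell B u ≤ k)

theorem card_le [Fintype N] :
    ∀ (k : ℕ) (A : N) (w : List T), (G.SS A w).Nonempty → G.ell A w = k + 1 →
      k + 1 ≤ (G.PP w (k + 1)).card := by
  intro k
  induction k with
  | zero =>
    intro A w hne h
    have hA : A ∈ G.PP w 1 := by
      classical
      simp only [PP, Finset.mem_filter, Finset.mem_univ, true_and]
      exact ⟨w, List.Sublist.refl w, hne, le_of_eq h⟩
    exact Finset.card_pos.mpr ⟨A, hA⟩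
  | succ k ih =>
    intro A w hne h
    classical
    obtain ⟨B, u, huw, hneB, hB⟩ := G.step hne (by omega : G.ell A w = k + 2)
    have ihB := ih B u hneB hB
    have hsub : insert A (G.PP u (k + 1)) ⊆ G.PP w (k + 2) := by
      classical
      intro C hC
      simp only [Finset.mem_insert, PP, Finset.mem_filter, Finset.mem_univ, true_and] at hC ⊢
      rcases hC with rfl | ⟨u', h1, h2, h3⟩
      · exact ⟨w, List.Sublist.refl w, hne, by omega⟩
      · exact ⟨u', h1.trans huw, h2, by omega⟩
    have hAnot : A ∉ G.PP u (k + 1) := by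
      classical
      simp only [PP, Finset.mem_filter, Finset.mem_univ, true_and, not_exists]
      intro u' hcon
      rcases hcon with ⟨h1, h2, h3⟩
      obtain ⟨v0, hv0, d0⟩ := Nat.sInf_mem h2
      have hm : G.ell A u' ∈ G.SS A w := ⟨v0, (hv0.trans h1).trans huw, d0⟩
      have hle : G.ell A w ≤ G.ell A u' := Nat.sInf_le hm
      omega
    have hcard : (G.PP u (k + 1)).card + 1 ≤ (G.PP w (k + 2)).card := by
      have h1 := Finset.card_le_card hsub
      rwa [Finset.card_insert_of_notMem hAnot] at h1
    have hgoal : k + 2 ≤ (G.PP w (k + 2)).card := by omega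
    exact hgoal

theorem ell_le_card [Fintype N] {A : N} {w : List T} (hne : (G.SS A w).Nonempty) :
    G.ell A w ≤ Fintype.card N := by
  have hpos := G.ell_pos hne
  obtain ⟨k, hk⟩ : ∃ k, G.ell A w = k + 1 := ⟨G.ell A w - 1, by omega⟩
  have h1 := G.card_le k A w hne hk
  have h2 := Finset.card_le_univ (G.PP w (k + 1))
  omega

end CNF

/-- If `w` is a `⪯`-minimal word of `L(G)` for a CNF grammar `G` with nonterminal set `N`
(and no useless symbols), then `w` has a derivation tree of height at most `|N| + 1`. -/
theorem minimal_word_short_derivation {N T : Type*} [Fintype N] (G : CNF N T)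
    (huseful : ∀ A : N, ∃ (w : List T) (n : ℕ), G.DerivesH A n w)
    (w : List T) (hw : w ∈ G.lang)
    (hmin : ∀ v ∈ G.lang, v.Sublist w → v = w) :
    G.DerivesH G.start (Fintype.card N + 1) w := by
  obtain ⟨n, d⟩ := hw
  have hne : (G.SS G.start w).Nonempty := ⟨n, w, List.Sublist.refl w, d⟩
  obtain ⟨v, hvw, dv⟩ := Nat.sInf_mem hne
  have hvl : v ∈ G.lang := ⟨_, dv⟩
  have hveq : v = w := hmin v hvl hvw
  subst hveq
  exact dv.mono G (le_trans (G.ell_le_card hne) (by omega))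
end

section
/- Let G be a context-free grammar and A a nonterminal such that A ⇒⁺ m A m' A m'' for some sentential forms m, m', m''. Then the downward closure of L(G, A) under the subword ordering equals α(L(G, A))*, where α(L(G, A)) is the set of terminal letters occurring in some word of L(G, A). -/
/-!
Substituting terminal words for the sentential forms around the two copies of `A` turns
`A ⇒⁺ m A m' A m''` into a context `x _ y _ z` with terminal `x, y, z` under which `L(G, A)` is
closed, so for any two words of `L(G, A)` their concatenation is a subword of a third one.
Every language that is nonempty and closed in this weak sense has as downward closure the free
monoid over its alphabet: a word `a₁ ⋯ aₙ` over that alphabet is a subword of the concatenation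
of words containing `a₁, …, aₙ`.
-/

open ContextFreeGrammar

/-- The language generated by grammar `g` starting from the nonterminal `A`. -/
def langFrom {T : Type} (g : ContextFreeGrammar T) (A : g.NT) : Set (List T) :=
  {w | g.Derives [Symbol.nonterminal A] (w.map Symbol.terminal)}

/-- `α(L)`: the set of terminal letters occurring in some word of `L`. -/
def alph {T : Type} (L : Set (List T)) : Set T :=
  {a | ∃ w ∈ L, a ∈ w}

/-- Downward closure under the subword ordering. -/
def downClosure {T : Type} (L : Set (List T)) : Set (List T) :=
  {u | ∃ v ∈ L, u.Sublist v}

theorem downClosure_eq_of_append_sublist {T : Type} {L : Set (List T)} (hne : L.Nonempty)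
    (happend : ∀ v ∈ L, ∀ w ∈ L, ∃ u ∈ L, (v ++ w).Sublist u) :
    downClosure L = {u : List T | ∀ a ∈ u, a ∈ alph L} := by
  ext u
  simp only [downClosure, alph, Set.mem_ofPred_eq]
  constructor
  · rintro ⟨v, hv, huv⟩ a ha
    exact ⟨v, hv, huv.subset ha⟩
  · intro hu
    induction u with
    | nil =>
      obtain ⟨w, hw⟩ := hne
      exact ⟨w, hw, List.nil_sublist w⟩
    | cons a u ih =>
      obtain ⟨v, hv, huv⟩ := ih fun b hb => hu b (List.mem_cons_of_mem a hb)
      obtain ⟨w, hw, haw⟩ := hu a List.mem_cons_self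
      obtain ⟨x, hx, hwvx⟩ := happend w hw v hv
      exact ⟨x, hx, ((List.singleton_sublist.mpr haw).append huv).trans hwvx⟩

namespace ContextFreeGrammar

variable {T : Type} {g : ContextFreeGrammar T}

theorem Derives.append {u u' v v' : List (Symbol T g.NT)} (hu : g.Derives u u')
    (hv : g.Derives v v') : g.Derives (u ++ v) (u' ++ v') :=
  (hu.append_right v).trans (hv.append_left u')

theorem exists_derives_terminal
    (huseful : ∀ B : g.NT, ∃ w : List T,
      g.Derives [Symbol.nonterminal B] (w.map Symbol.terminal))
    (s : List (Symbol T g.NT)) : ∃ w : List T, g.Derives s (w.map Symbol.terminal) := by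
  induction s with
  | nil => exact ⟨[], Derives.refl []⟩
  | cons σ s ih =>
    obtain ⟨w, hw⟩ := ih
    obtain ⟨v, hv⟩ : ∃ v : List T, g.Derives [σ] (v.map Symbol.terminal) := by
      cases σ with
      | terminal t => exact ⟨[t], Derives.refl _⟩
      | nonterminal B => exact huseful B
    exact ⟨v ++ w, by simpa using hv.append hw⟩

theorem exists_append_sublist_mem_langFrom {A : g.NT} {m m' m'' : List (Symbol T g.NT)}
    (huseful : ∀ B : g.NT, ∃ w : List T,
      g.Derives [Symbol.nonterminal B] (w.map Symbol.terminal))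
    (hA : g.Derives [Symbol.nonterminal A]
      (m ++ [Symbol.nonterminal A] ++ m' ++ [Symbol.nonterminal A] ++ m''))
    {v w : List T} (hv : v ∈ langFrom g A) (hw : w ∈ langFrom g A) :
    ∃ u ∈ langFrom g A, (v ++ w).Sublist u := by
  obtain ⟨x, hx⟩ := exists_derives_terminal huseful m
  obtain ⟨y, hy⟩ := exists_derives_terminal huseful m'
  obtain ⟨z, hz⟩ := exists_derives_terminal huseful m''
  refine ⟨x ++ v ++ y ++ w ++ z, ?_, ?_⟩
  · have := hA.trans ((((hx.append hv).append hy).append hw).append hz)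
    simpa only [langFrom, Set.mem_ofPred_eq, List.map_append] using this
  · have hvw : (v ++ w).Sublist ((x ++ v) ++ (y ++ (w ++ z))) :=
      (List.sublist_append_right x v).append
        ((List.sublist_append_left w z).trans (List.sublist_append_right y (w ++ z)))
    simpa only [List.append_assoc] using hvw

end ContextFreeGrammar

/-- If `A ⇒⁺ m A m' A m''` in a CFG without useless symbols, then
`L(G, A)↓ = α(L(G, A))*`. -/
theorem downClosure_eq_star_of_self_twice {T : Type} (g : ContextFreeGrammar T) (A : g.NT)
    (huseful : ∀ B : g.NT, ∃ w : List T,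
      g.Derives [Symbol.nonterminal B] (w.map Symbol.terminal))
    (hAA : ∃ m m' m'' : List (Symbol T g.NT),
      Relation.TransGen g.Produces [Symbol.nonterminal A]
        (m ++ [Symbol.nonterminal A] ++ m' ++ [Symbol.nonterminal A] ++ m'')) :
    downClosure (langFrom g A) = {u : List T | ∀ a ∈ u, a ∈ alph (langFrom g A)} := by
  obtain ⟨m, m', m'', hA⟩ := hAA
  refine downClosure_eq_of_append_sublist (huseful A) fun v hv w hw => ?_
  exact exists_append_sublist_mem_langFrom huseful hA.to_reflTransGen hv hw
end

section
/- Given a CFG G = (N, T, R, S) in Chomsky normal form, define the grammar G' with nonterminals N × {0,…,|N|}, start symbol (S,|N|), and rules: (A,0) → a whenever A → a ∈ R; (A,i) → (B,i−1)(C,i−1) for i ∈ [1,|N|] whenever A → BC ∈ R; and (A,i) → (A,i−1) for i ∈ [1,|N|]. Then L(G') ⊆ L(G) and L(G')↑ = L(G)↑. -/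
/-- A grammar with binary productions `A → BC`, unary productions `A → B`, and terminal
productions `A → a`. -/
structure Gram (N T : Type*) where
  bin : N → N → N → Prop
  un : N → N → Prop
  leaf : N → T → Prop

/-- Derivation of a terminal word from a nonterminal. -/
inductive Gram.Der {N T : Type*} (G : Gram N T) : N → List T → Prop
  | leaf {A : N} {a : T} : G.leaf A a → Gram.Der G A [a]
  | un {A B : N} {w : List T} : G.un A B → Gram.Der G B w → Gram.Der G A w
  | bin {A B C : N} {u v : List T} : G.bin A B C →
      Gram.Der G B u → Gram.Der G C v → Gram.Der G A (u ++ v)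

/-- Upward closure under the subword ordering. -/
def upClosure {A : Type*} (L : Set (List A)) : Set (List A) :=
  {v | ∃ u ∈ L, u.Sublist v}

section Aux

variable {N T : Type*}

/-- Derivation trees as data. -/
inductive DTree (G : Gram N T) : N → List T → Type _
  | leaf {A a} : G.leaf A a → DTree G A [a]
  | un {A B w} : G.un A B → DTree G B w → DTree G A w
  | bin {A B C u v} : G.bin A B C → DTree G B u → DTree G C v → DTree G A (u ++ v)

namespace DTree

variable {G : Gram N T}

def size : ∀ {A w}, DTree G A w → ℕ
  | _, _, .leaf _ => 1
  | _, _, .un _ t => t.size + 1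
  | _, _, .bin _ t1 t2 => t1.size + t2.size + 1

def hasLabel : ∀ {A w}, DTree G A w → N → Prop
  | A, _, .leaf _, B => A = B
  | A, _, .un _ t, B => A = B ∨ t.hasLabel B
  | A, _, .bin _ t1 t2, B => A = B ∨ t1.hasLabel B ∨ t2.hasLabel B

lemma hasLabel_root : ∀ {A w} (t : DTree G A w), t.hasLabel A := by
  intro A w t
  cases t with
  | leaf _ => exact rfl
  | un _ _ => exact Or.inl rfl
  | bin _ _ _ => exact Or.inl rfl

lemma size_pos : ∀ {A w} (t : DTree G A w), 1 ≤ t.size := by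
  intro A w t
  cases t <;> simp [size]

/-- Extract a subtree of `t` whose root is labelled `B`. -/
lemma extract : ∀ {A w} (t : DTree G A w) (B : N), t.hasLabel B →
    ∃ w', w'.Sublist w ∧ ∃ t' : DTree G B w',
      t'.size ≤ t.size ∧ ∀ C, t'.hasLabel C → t.hasLabel C := by
  intro A w t
  induction t with
  | leaf h =>
    intro B hB
    cases hB
    exact ⟨_, List.Sublist.refl _, .leaf h, le_refl _, fun _ h => h⟩
  | un h t ih =>
    intro B hB
    rcases hB with rfl | hB
    · exact ⟨_, List.Sublist.refl _, .un h t, le_refl _, fun _ h => h⟩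
    · obtain ⟨w', hw', t', hsz, hlab⟩ := ih B hB
      exact ⟨w', hw', t', hsz.trans (Nat.le_succ _), fun C hC => Or.inr (hlab C hC)⟩
  | bin h t1 t2 ih1 ih2 =>
    intro B hB
    rcases hB with rfl | hB | hB
    · exact ⟨_, List.Sublist.refl _, .bin h t1 t2, le_refl _, fun _ h => h⟩
    · obtain ⟨w', hw', t', hsz, hlab⟩ := ih1 B hB
      exact ⟨w', hw'.trans (List.sublist_append_left _ _), t',
        hsz.trans (by simp [size]; omega), fun C hC => Or.inr (Or.inl (hlab C hC))⟩
    · obtain ⟨w', hw', t', hsz, hlab⟩ := ih2 B hB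
      exact ⟨w', hw'.trans (List.sublist_append_right _ _), t',
        hsz.trans (by simp [size]; omega), fun C hC => Or.inr (Or.inr (hlab C hC))⟩

end DTree

lemma der_nonempty_dtree {G : Gram N T} {A : N} {w : List T} (h : G.Der A w) :
    Nonempty (DTree G A w) := by
  induction h with
  | leaf h => exact ⟨.leaf h⟩
  | un h _ ih => exact ih.elim fun t => ⟨.un h t⟩
  | bin h _ _ ih1 ih2 => exact ih1.elim fun t1 => ih2.elim fun t2 => ⟨.bin h t1 t2⟩

lemma dtree_der {G : Gram N T} {A : N} {w : List T} (t : DTree G A w) : G.Der A w := by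
  induction t with
  | leaf h => exact .leaf h
  | un h _ ih => exact .un h ih
  | bin h _ _ ih1 ih2 => exact .bin h ih1 ih2

/-- Height-bounded derivations. -/
inductive DerH (G : Gram N T) : N → List T → ℕ → Prop
  | leaf {A a n} : G.leaf A a → DerH G A [a] n
  | bin {A B C u v n} : G.bin A B C → DerH G B u n → DerH G C v n →
      DerH G A (u ++ v) (n + 1)

/-- Main combinatorial lemma: every derived word has a height-bounded derived subword. -/
lemma derH_of_dtree [Fintype N] {G : Gram N T} (hun : ∀ A B, ¬ G.un A B) :
    ∀ (n : ℕ) {A : N} {w : List T} (t : DTree G A w), t.size ≤ n →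
      ∀ s : Finset N, (∀ B, t.hasLabel B → B ∉ s) →
      ∃ u, u.Sublist w ∧ DerH G A u (Fintype.card N - s.card) := by
  classical
  classical
  intro n
  induction n using Nat.strong_induction_on with
  | _ n ih =>
    intro A w t hn s hs
    cases t with
    | leaf h => exact ⟨_, List.Sublist.refl _, .leaf h⟩
    | un h t => exact absurd h (hun _ _)
    | @bin A B C w1 w2 h t1 t2 =>
      have hsz1 : 1 ≤ t1.size := t1.size_pos
      have hsz2 : 1 ≤ t2.size := t2.size_pos
      have hsz : t1.size + t2.size + 1 ≤ n := hn
      by_cases h1 : t1.hasLabel A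
      · obtain ⟨w', hw', t', hsz', hlab⟩ := t1.extract A h1
        obtain ⟨u, hu, hd⟩ := ih (n - 1) (by omega) t' (by omega) s
          (fun B hB => hs B (Or.inr (Or.inl (hlab B hB))))
        exact ⟨u, hu.trans (hw'.trans (List.sublist_append_left _ _)), hd⟩
      · by_cases h2 : t2.hasLabel A
        · obtain ⟨w', hw', t', hsz', hlab⟩ := t2.extract A h2
          obtain ⟨u, hu, hd⟩ := ih (n - 1) (by omega) t' (by omega) s
            (fun B hB => hs B (Or.inr (Or.inr (hlab B hB))))
          exact ⟨u, hu.trans (hw'.trans (List.sublist_append_right _ _)), hd⟩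
        · have hAs : A ∉ s := hs A (Or.inl rfl)
          have hcard : (insert A s).card = s.card + 1 := Finset.card_insert_of_notMem hAs
          have hle : (insert A s).card ≤ Fintype.card N := Finset.card_le_univ _
          have hlab1 : ∀ D, t1.hasLabel D → D ∉ insert A s := by
            intro D hD hmem
            rcases Finset.mem_insert.mp hmem with rfl | hmem
            · exact h1 hD
            · exact hs D (Or.inr (Or.inl hD)) hmem
          have hlab2 : ∀ D, t2.hasLabel D → D ∉ insert A s := by
            intro D hD hmem
            rcases Finset.mem_insert.mp hmem with rfl | hmem
            · exact h2 hD
            · exact hs D (Or.inr (Or.inr hD)) hmem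
          obtain ⟨u1, hu1, hd1⟩ := ih (n - 1) (by omega) t1 (by omega) (insert A s) hlab1
          obtain ⟨u2, hu2, hd2⟩ := ih (n - 1) (by omega) t2 (by omega) (insert A s) hlab2
          refine ⟨u1 ++ u2, hu1.append hu2, ?_⟩
          have : Fintype.card N - s.card = (Fintype.card N - (insert A s).card) + 1 := by omega
          rw [this]
          exact .bin h hd1 hd2

end Aux

/-- Given a CNF grammar `G` (binary rules `bin`, terminal rules `leaf`, start symbol `S`,
no unary rules, no useless symbols, no ε-productions), the grammar `G'` with nonterminals
`N × {0,…,|N|}`, start symbol `(S, |N|)`, and rules `(A,0) → a` for `A → a`,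
`(A,i) → (B,i−1)(C,i−1)` and `(A,i) → (A,i−1)` for `1 ≤ i ≤ |N|`, satisfies
`L(G') ⊆ L(G)` and `L(G')↑ = L(G)↑`. -/
theorem bounded_height_grammar_upClosure {N T : Type*} [Fintype N]
    (bin : N → N → N → Prop) (leaf : N → T → Prop) (S : N)
    (G : Gram N T) (hG : G = ⟨bin, fun _ _ => False, leaf⟩)
    (G' : Gram (N × ℕ) T)
    (hG' : G' = ⟨fun p q r => 1 ≤ p.2 ∧ p.2 ≤ Fintype.card N ∧
                    q.2 = p.2 - 1 ∧ r.2 = p.2 - 1 ∧ bin p.1 q.1 r.1,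
                 fun p q => 1 ≤ p.2 ∧ p.2 ≤ Fintype.card N ∧ q.1 = p.1 ∧ q.2 = p.2 - 1,
                 fun p a => p.2 = 0 ∧ leaf p.1 a⟩)
    (huseful : ∀ A : N, ∃ w : List T, G.Der A w) :
    {w | G'.Der (S, Fintype.card N) w} ⊆ {w | G.Der S w} ∧
      upClosure {w | G'.Der (S, Fintype.card N) w} = upClosure {w | G.Der S w} := by
  subst hG hG'
  set G : Gram N T := ⟨bin, fun _ _ => False, leaf⟩ with hGdef
  set c := Fintype.card N with hc
  set G' : Gram (N × ℕ) T := ⟨fun p q r => 1 ≤ p.2 ∧ p.2 ≤ c ∧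
      q.2 = p.2 - 1 ∧ r.2 = p.2 - 1 ∧ bin p.1 q.1 r.1,
    fun p q => 1 ≤ p.2 ∧ p.2 ≤ c ∧ q.1 = p.1 ∧ q.2 = p.2 - 1,
    fun p a => p.2 = 0 ∧ leaf p.1 a⟩ with hG'def
  -- forward direction
  have fwd : ∀ {p : N × ℕ} {w : List T}, G'.Der p w → G.Der p.1 w := by
    intro p w h
    induction h with
    | leaf h => exact .leaf h.2
    | un h _ ih => exact h.2.2.1 ▸ ih
    | bin h _ _ ih1 ih2 => exact .bin h.2.2.2.2 ih1 ih2
  -- leaf chains in G'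
  have leafChain : ∀ (m : ℕ), m ≤ c → ∀ {A : N} {a : T}, leaf A a → G'.Der (A, m) [a] := by
    intro m
    induction m with
    | zero => intro _ A a h; exact .leaf ⟨rfl, h⟩
    | succ m ih =>
      intro hm A a h
      exact .un (B := (A, m)) ⟨Nat.succ_le_succ (Nat.zero_le _), hm, rfl, rfl⟩
        (ih (by omega) h)
  -- height-bounded derivations give G' derivations
  have toG' : ∀ {A : N} {u : List T} {m : ℕ}, DerH G A u m → m ≤ c → G'.Der (A, m) u := by
    intro A u m h
    induction h with
    | leaf h => intro hm; exact leafChain _ hm h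
    | @bin A B C u v m h _ _ ih1 ih2 =>
      intro hm
      exact .bin (B := (B, m)) (C := (C, m))
        ⟨Nat.succ_le_succ (Nat.zero_le _), hm, rfl, rfl, h⟩
        (ih1 (by omega)) (ih2 (by omega))
  have hun : ∀ A B, ¬ G.un A B := fun _ _ h => h
  constructor
  · intro w hw
    exact fwd hw
  · apply Set.Subset.antisymm
    · rintro v ⟨u, hu, huv⟩
      exact ⟨u, fwd hu, huv⟩
    · rintro v ⟨w, hw, hwv⟩
      obtain ⟨t⟩ := der_nonempty_dtree hw
      obtain ⟨u, hu, hd⟩ := derH_of_dtree hun t.size t (le_refl _) ∅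
        (fun _ _ h => absurd h (Finset.notMem_empty _))
      simp only [Finset.card_empty, Nat.sub_zero] at hd
      exact ⟨u, toG' hd (le_refl _), hu.trans hwv⟩
end

section
/- A language over a finite alphabet is a finite positive Boolean combination of piece languages if and only if it is upward closed under the subword ordering. -/
/-- Finite positive Boolean combinations (unions and intersections, including the empty
union `∅`) of piece languages; the piece language of the word `w = a₁⋯aₙ` is
`Σ* a₁ Σ* ⋯ Σ* aₙ Σ* = {v | w ⪯ v}`. -/
inductive PosPTL {A : Type*} : Set (List A) → Prop
  | piece (w : List A) : PosPTL {v | w.Sublist v}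
  | empty : PosPTL ∅
  | union {L L' : Set (List A)} : PosPTL L → PosPTL L' → PosPTL (L ∪ L')
  | inter {L L' : Set (List A)} : PosPTL L → PosPTL L' → PosPTL (L ∩ L')

/-!
Piece languages are upward closed, and upward closure survives unions and intersections.
Conversely, by Higman's lemma the subword ordering on words over a finite alphabet is a
well-quasi-order, so the minimal words of an upward closed language form a finite antichain,
and the language is the union of the piece languages of these minimal words.
-/

theorem WellQuasiOrdered.exists_finite_basis {α : Type*} {r : α → α → Prop} [IsPartialOrder α r]
    (h : WellQuasiOrdered r) (s : Set α) :
    ∃ t ⊆ s, t.Finite ∧ ∀ x ∈ s, ∃ b ∈ t, r b x := by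
  let : PartialOrder α :=
    { le := r, le_refl := refl_of r, le_trans := fun _ _ _ ↦ trans_of r,
      le_antisymm := fun _ _ ↦ antisymm_of r }
  have hs : s.IsPWO := Set.partiallyWellOrderedOn_of_wellQuasiOrdered h s
  refine ⟨{x | Minimal (· ∈ s) x}, setOfPred_minimal_subset _,
    (setOfPred_minimal_antichain (· ∈ s)).finite_of_partiallyWellOrderedOn
      (hs.mono (setOfPred_minimal_subset _)), fun x hx ↦ ?_⟩
  obtain ⟨b, hbx, hb⟩ := hs.exists_le_minimal hx
  exact ⟨b, hb, hbx⟩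

namespace List

variable {α : Type*}

instance isPartialOrder_sublist : IsPartialOrder (List α) Sublist where
  refl := Sublist.refl
  trans _ _ _ := Sublist.trans
  antisymm _ _ := Sublist.antisymm

theorem sublistForall₂_eq_eq_sublist : SublistForall₂ (α := α) (· = ·) = Sublist := by
  ext l₁ l₂
  simp [sublistForall₂_iff, forall₂_eq_eq_eq]

/-- Higman's lemma for the subword ordering over a finite alphabet. -/
theorem wellQuasiOrdered_sublist [Finite α] : WellQuasiOrdered (@Sublist α) := by
  have hα : (Set.univ : Set α).PartiallyWellOrderedOn (· = ·) :=
    Set.finite_univ.partiallyWellOrderedOn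
  have higman := hα.partiallyWellOrderedOn_sublistForall₂
  simpa only [Set.mem_univ, implies_true, Set.ofPred_true, Set.partiallyWellOrderedOn_univ_iff,
    sublistForall₂_eq_eq_sublist] using higman

end List

namespace PosPTL

variable {A : Type*}

theorem sublist_mem {L : Set (List A)} (hL : PosPTL L) {u v : List A} (hu : u ∈ L)
    (huv : u.Sublist v) : v ∈ L := by
  induction hL generalizing u with
  | piece w => exact hu.trans huv
  | empty => exact hu.elim
  | union _ _ ih₁ ih₂ => exact hu.imp (ih₁ · huv) (ih₂ · huv)
  | inter _ _ ih₁ ih₂ => exact ⟨ih₁ hu.1 huv, ih₂ hu.2 huv⟩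

theorem biUnion_piece {B : Set (List A)} (hB : B.Finite) :
    PosPTL (⋃ w ∈ B, {v | w.Sublist v}) := by
  induction B, hB using Set.Finite.induction_on with
  | empty => simpa using PosPTL.empty
  | insert _ _ ih =>
    rw [Set.biUnion_insert]
    exact (PosPTL.piece _).union ih

end PosPTL

/-- A language over a finite alphabet is a finite positive Boolean combination of piece
languages iff it is upward closed under the subword ordering. -/
theorem posPTL_iff_upwardClosed {A : Type*} [Finite A] (L : Set (List A)) :
    PosPTL L ↔ ∀ u ∈ L, ∀ v : List A, u.Sublist v → v ∈ L := by
  refine ⟨fun hL u hu v huv ↦ hL.sublist_mem hu huv, fun hup ↦ ?_⟩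
  obtain ⟨B, hBL, hB, hbasis⟩ := List.wellQuasiOrdered_sublist.exists_finite_basis L
  have hL : L = ⋃ w ∈ B, {v | w.Sublist v} := by
    ext v
    simp only [Set.mem_iUnion, Set.mem_ofPred_eq, exists_prop]
    exact ⟨hbasis v, fun ⟨w, hw, hwv⟩ ↦ hup w (hBL hw) v hwv⟩
  exact hL ▸ PosPTL.biUnion_piece hB
end

section
/- If a two-way transducer T has a run ρ on input w in which some position x is visited twice in the same state q, then there is another accepting run on a (possibly shorter) input obtained by deleting the segment of the run between the two visits; iterating this yields a normalized run (visiting each state at most once per position) whose visiting sequences at each position have length at most |Q|, so the number of distinct visiting sequences is at most Σ_{i=1}^{|Q|} (2|Q|)^i. -/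
/-- A two-way finite automaton (the underlying automaton of a two-way transducer):
`step q s q' d` means that from state `q` reading symbol `s` (a letter `Sum.inr a`, the
left endmarker `Sum.inl false`, or the right endmarker `Sum.inl true`) the machine may
move to state `q'` in direction `d` (`true` = right, `false` = left). -/
structure TwoNFA (A : Type*) where
  Q : Type*
  start : Set Q
  accept : Set Q
  step : Q → Bool ⊕ A → Q → Bool → Prop

/-- The symbol at position `i` of `⊢ w ⊣` (position 0 is `⊢`, position `|w|+1` is `⊣`). -/
def symAt {A : Type*} (w : List A) (i : ℕ) : Bool ⊕ A :=
  if i = 0 then Sum.inl false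
  else if h : i - 1 < w.length then Sum.inr (w.get ⟨i - 1, h⟩) else Sum.inl true

/-- One step between configurations (state, position). -/
def StepOk {A : Type*} (M : TwoNFA A) (w : List A) (c c' : M.Q × ℕ) : Prop :=
  c.2 ≤ w.length + 1 ∧ c'.2 ≤ w.length + 1 ∧
    ∃ d : Bool, M.step c.1 (symAt w c.2) c'.1 d ∧
      (if d then c'.2 = c.2 + 1 else 1 ≤ c.2 ∧ c'.2 = c.2 - 1)

/-- An accepting run on `⊢ w ⊣`: starts in an initial state on `⊢` and ends in an
accepting state on `⊣`. -/
def IsAccRun {A : Type*} (M : TwoNFA A) (w : List A) (ρ : List (M.Q × ℕ)) : Prop :=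
  ρ.Chain' (StepOk M w) ∧
    (∃ q ∈ M.start, ρ.head? = some (q, 0)) ∧
    (∃ q ∈ M.accept, ρ.getLast? = some (q, w.length + 1))

/-- The visiting sequence of the run `ρ` at position `x`: the ordered list of
(state, direction of outgoing transition) pairs of the visits of `ρ` to `x`. -/
def visitSeq {Q : Type*} (ρ : List (Q × ℕ)) (x : ℕ) : List (Q × Bool) :=
  ((ρ.zip ρ.tail).filter (fun p => p.1.2 == x)).map
    (fun p => (p.1.1, decide (p.1.2 < p.2.2)))

/-! A run that visits the same configuration (state, position) twice contains a loop; cutting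
it out leaves a valid run with the same first and last configurations, hence again an
accepting one, and strictly shorter. A shortest accepting run therefore repeats no
configuration, so its visits to any fixed position are in pairwise distinct states: each
visiting sequence has length at most `|Q|`, and there are at most `(2|Q|)^i` sequences of
length `i` over `Q × {+, -}`. -/

namespace List

variable {α : Type*}

theorem exists_eq_append_cons_append_cons_of_not_nodup :
    ∀ {l : List α}, ¬ l.Nodup → ∃ x s t u, l = s ++ x :: (t ++ x :: u)
  | [], h => absurd nodup_nil h
  | a :: l, h => by
    rw [nodup_cons, not_and_or, not_not] at h
    rcases h with ha | hl
    · obtain ⟨t, u, rfl⟩ := append_of_mem ha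
      exact ⟨a, [], t, u, rfl⟩
    · obtain ⟨x, s, t, u, rfl⟩ := exists_eq_append_cons_append_cons_of_not_nodup hl
      exact ⟨x, a :: s, t, u, rfl⟩

theorem IsChain.exists_shorter_of_not_nodup {R : α → α → Prop} {l : List α}
    (hl : l.IsChain R) (hnd : ¬ l.Nodup) :
    ∃ l' : List α, l'.IsChain R ∧ l'.head? = l.head? ∧ l'.getLast? = l.getLast? ∧
      l'.length < l.length := by
  obtain ⟨x, s, t, u, rfl⟩ := exists_eq_append_cons_append_cons_of_not_nodup hnd
  obtain ⟨hs, hxtu⟩ := isChain_split.mp hl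
  rw [← cons_append] at hxtu
  refine ⟨s ++ x :: u, isChain_split.mpr ⟨hs, (isChain_split.mp hxtu).2⟩, ?_, ?_, ?_⟩
  · simp
  · simp [getLast?_cons]
  · simp

theorem map_fst_zip_tail : ∀ l : List α, (l.zip l.tail).map Prod.fst = l.dropLast
  | [] | [_] => rfl
  | a :: b :: t => congrArg (a :: ·) (map_fst_zip_tail (b :: t))

section Fintype

variable (α) [Fintype α]

theorem ncard_setOf_length_eq (n : ℕ) :
    {l : List α | l.length = n}.ncard = Fintype.card α ^ n := by
  rw [← Nat.card_coe_set_eq]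
  exact (Nat.card_eq_fintype_card (α := List.Vector α n)).trans (card_vector n)

theorem ncard_setOf_ne_nil_length_le (n : ℕ) :
    {l : List α | l ≠ [] ∧ l.length ≤ n}.ncard ≤
      ∑ i ∈ Finset.Icc 1 n, Fintype.card α ^ i := by
  have hunion : {l : List α | l ≠ [] ∧ l.length ≤ n} =
      ⋃ i ∈ Finset.Icc 1 n, {l : List α | l.length = i} := by
    ext l
    simp [Nat.one_le_iff_ne_zero]
  rw [hunion]
  exact (Finset.set_ncard_biUnion_le _ _).trans_eq
    (Finset.sum_congr rfl fun i _ => ncard_setOf_length_eq α i)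

end Fintype

end List

section VisitSeq

variable {Q : Type*}

theorem map_fst_visitSeq (ρ : List (Q × ℕ)) (x : ℕ) :
    (visitSeq ρ x).map Prod.fst = (ρ.dropLast.filter (·.2 == x)).map Prod.fst := by
  simp [visitSeq, ← List.map_fst_zip_tail, List.filter_map, Function.comp_def]

theorem length_visitSeq_le_card [Fintype Q] {ρ : List (Q × ℕ)} (hρ : ρ.Nodup) (x : ℕ) :
    (visitSeq ρ x).length ≤ Fintype.card Q := by
  have hvisits : (ρ.dropLast.filter (·.2 == x)).Nodup :=
    hρ.sublist (List.filter_sublist.trans (List.dropLast_sublist ρ))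
  have hstates : ((visitSeq ρ x).map Prod.fst).Nodup := by
    rw [map_fst_visitSeq]
    refine hvisits.map_on fun a ha b hb hab => Prod.ext hab ?_
    simp only [List.mem_filter, beq_iff_eq] at ha hb
    rw [ha.2, hb.2]
  simpa using hstates.length_le_card

end VisitSeq

namespace IsAccRun

variable {A : Type*} {M : TwoNFA A} {w : List A} {ρ : List (M.Q × ℕ)}

theorem exists_shorter (hρ : IsAccRun M w ρ) (hnd : ¬ ρ.Nodup) :
    ∃ ρ' : List (M.Q × ℕ), IsAccRun M w ρ' ∧ ρ'.length < ρ.length := by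
  obtain ⟨hchain, hstart, haccept⟩ := hρ
  obtain ⟨ρ', hchain', hhead, hlast, hlen⟩ := List.IsChain.exists_shorter_of_not_nodup hchain hnd
  exact ⟨ρ', ⟨hchain', hhead ▸ hstart, hlast ▸ haccept⟩, hlen⟩

theorem exists_nodup (hρ : IsAccRun M w ρ) :
    ∃ ρ' : List (M.Q × ℕ), IsAccRun M w ρ' ∧ ρ'.Nodup := by
  induction hn : ρ.length using Nat.strong_induction_on generalizing ρ with
  | _ n ih =>
    by_cases hnd : ρ.Nodup
    · exact ⟨ρ, hρ, hnd⟩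
    · obtain ⟨ρ', hρ', hlt⟩ := hρ.exists_shorter hnd
      exact ih _ (hn ▸ hlt) hρ' rfl

end IsAccRun

theorem ncard_visitSeqs_le {Q : Type*} [Fintype Q] {ρ : List (Q × ℕ)} (hρ : ρ.Nodup) :
    {s : List (Q × Bool) | s ≠ [] ∧ ∃ x : ℕ, visitSeq ρ x = s}.ncard ≤
      ∑ i ∈ Finset.Icc 1 (Fintype.card Q), (2 * Fintype.card Q) ^ i := by
  have hsub : {s : List (Q × Bool) | s ≠ [] ∧ ∃ x : ℕ, visitSeq ρ x = s} ⊆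
      {s | s ≠ [] ∧ s.length ≤ Fintype.card Q} := by
    rintro s ⟨hs, x, rfl⟩
    exact ⟨hs, length_visitSeq_le_card hρ x⟩
  calc _ ≤ {s : List (Q × Bool) | s ≠ [] ∧ s.length ≤ Fintype.card Q}.ncard :=
        Set.ncard_le_ncard hsub
          ((List.finite_length_le _ _).subset fun s hs => hs.2)
    _ ≤ ∑ i ∈ Finset.Icc 1 (Fintype.card Q), Fintype.card (Q × Bool) ^ i :=
        List.ncard_setOf_ne_nil_length_le _ _
    _ = ∑ i ∈ Finset.Icc 1 (Fintype.card Q), (2 * Fintype.card Q) ^ i := by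
        rw [Fintype.card_prod, Fintype.card_bool, mul_comm]

/-- (1) If an accepting run visits the same configuration (state, position) twice,
deleting the segment between the two visits yields a strictly shorter accepting run;
(2) iterating this yields a normalized (duplicate-free) accepting run; (3) the visiting
sequences of a normalized run have length at most `|Q|`, so the number of distinct
(nonempty) visiting sequences is at most `∑_{i=1}^{|Q|} (2|Q|)^i`. -/
theorem two_way_normalized_run {A : Type*} (M : TwoNFA A) [Fintype M.Q]
    (w : List A) (ρ : List (M.Q × ℕ)) (hρ : IsAccRun M w ρ) :
    (¬ ρ.Nodup → ∃ ρ' : List (M.Q × ℕ), IsAccRun M w ρ' ∧ ρ'.length < ρ.length) ∧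
    (∃ ρ' : List (M.Q × ℕ), IsAccRun M w ρ' ∧ ρ'.Nodup) ∧
    (∀ ρ' : List (M.Q × ℕ), IsAccRun M w ρ' → ρ'.Nodup →
      (∀ x : ℕ, (visitSeq ρ' x).length ≤ Fintype.card M.Q) ∧
      {s : List (M.Q × Bool) | s ≠ [] ∧ ∃ x : ℕ, visitSeq ρ' x = s}.ncard ≤
        ∑ i ∈ Finset.Icc 1 (Fintype.card M.Q), (2 * Fintype.card M.Q) ^ i) :=
  ⟨hρ.exists_shorter, hρ.exists_nodup, fun _ _ hnd =>
    ⟨length_visitSeq_le_card hnd, ncard_visitSeqs_le hnd⟩⟩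
end
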